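/- arXiv:2212.02957 — 7 statements merged into one kernel-verified Lean document; each statement's English description precedes it below -/
import Mathlib

section
/- Every finite simple graph that is palindromic or antipalindromic has a perfect matching. -/
open Polynomial

/-- The characteristic polynomial (of the adjacency matrix) of a finite simple graph. -/
noncomputable def charPoly {V : Type*} [Finite V] (G : SimpleGraph V) : Polynomial ℤ :=
  letI := Fintype.ofFinite V
  letI := Classical.decEq V
  letI := Classical.decRel G.Adj
  (SimpleGraph.adjMatrix ℤ G).charpoly

/-- `G` is palindromic: writing `χ_G(λ) = Σ a_i λ^(n-i)`, we have `a_i = a_(n-i)`;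
equivalently the `i`-th and `(n-i)`-th coefficients agree for all `i ≤ n`. -/
def IsPalindromic {V : Type*} [Finite V] (G : SimpleGraph V) : Prop :=
  ∀ i ≤ Nat.card V, (charPoly G).coeff i = (charPoly G).coeff (Nat.card V - i)

/-- `G` is antipalindromic: writing `χ_G(λ) = Σ a_i λ^(n-i)`, we have `a_i = -a_(n-i)`. -/
def IsAntipalindromic {V : Type*} [Finite V] (G : SimpleGraph V) : Prop :=
  ∀ i ≤ Nat.card V, (charPoly G).coeff i = -(charPoly G).coeff (Nat.card V - i)

set_option linter.unusedSectionVars false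

section Aux

variable {V : Type*} [Fintype V] [DecidableEq V] (G : SimpleGraph V) [DecidableRel G.Adj]

/-- From a fixed-point-free involution along edges, build a perfect matching. -/
lemma pm_of_involution (σ : Equiv.Perm V) (hσ : σ⁻¹ = σ)
    (hadj : ∀ i, G.Adj (σ i) i) : ∃ M : G.Subgraph, M.IsPerfectMatching := by
  have hinv : ∀ v, σ (σ v) = v := by
    intro v
    nth_rewrite 1 [← hσ]
    exact σ.symm_apply_apply v
  refine ⟨⟨Set.univ, fun v w => G.Adj v w ∧ σ v = w, fun h => h.1,
    fun _ => Set.mem_univ _, ?_⟩, ?_⟩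
  · constructor; rintro v w ⟨ha, he⟩
    exact ⟨ha.symm, by rw [← he, hinv]⟩
  · rw [SimpleGraph.Subgraph.isPerfectMatching_iff]
    intro v
    refine ⟨σ v, ⟨(hadj v).symm, rfl⟩, ?_⟩
    rintro w ⟨-, hw⟩
    exact hw.symm

/-- If `G` has no perfect matching, its adjacency determinant over `ZMod 2` vanishes. -/
lemma det_adjMatrix_eq_zero (h : ∀ M : G.Subgraph, ¬ M.IsPerfectMatching) :
    (SimpleGraph.adjMatrix (ZMod 2) G).det = 0 := by
  classical
  have key : ∀ σ : Equiv.Perm V,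
      (Equiv.Perm.sign σ⁻¹ • ∏ i, SimpleGraph.adjMatrix (ZMod 2) G (σ⁻¹ i) i : ZMod 2)
      = Equiv.Perm.sign σ • ∏ i, SimpleGraph.adjMatrix (ZMod 2) G (σ i) i := by
    intro σ
    rw [Equiv.Perm.sign_inv]
    congr 1
    calc ∏ i, SimpleGraph.adjMatrix (ZMod 2) G (σ⁻¹ i) i
        = ∏ i, SimpleGraph.adjMatrix (ZMod 2) G (σ⁻¹ (σ i)) (σ i) :=
          (Equiv.prod_comp σ fun i => SimpleGraph.adjMatrix (ZMod 2) G (σ⁻¹ i) i).symm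
      _ = ∏ i, SimpleGraph.adjMatrix (ZMod 2) G i (σ i) := by simp
      _ = ∏ i, SimpleGraph.adjMatrix (ZMod 2) G (σ i) i := by
          congr 1; funext i
          simp [SimpleGraph.adjMatrix_apply, SimpleGraph.adj_comm]
  rw [Matrix.det_apply]
  refine Finset.sum_ninvolution (fun σ => σ⁻¹) ?_ ?_ (fun _ => Finset.mem_univ _)
    (fun σ => inv_inv σ)
  · intro σ
    show (Equiv.Perm.sign σ • ∏ i, SimpleGraph.adjMatrix (ZMod 2) G (σ i) i : ZMod 2)
      + Equiv.Perm.sign σ⁻¹ • ∏ i, SimpleGraph.adjMatrix (ZMod 2) G (σ⁻¹ i) i = 0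
    rw [key]
    exact CharTwo.add_self_eq_zero _
  · intro σ hne hc
    have hc' : σ⁻¹ = σ := hc
    have hne' : (Equiv.Perm.sign σ • ∏ i, SimpleGraph.adjMatrix (ZMod 2) G (σ i) i : ZMod 2)
        ≠ 0 := hne
    have hadj : ∀ i, G.Adj (σ i) i := by
      intro i
      by_contra hij
      apply hne'
      rw [Finset.prod_eq_zero (Finset.mem_univ i)
        (by simp [SimpleGraph.adjMatrix_apply, hij]), smul_zero]
    obtain ⟨M, hM⟩ := pm_of_involution G σ hc' hadj
    exact h M hM

end Aux

/-- Every finite simple graph that is palindromic or antipalindromic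
has a perfect matching. -/
theorem palindromic_has_perfect_matching {V : Type*} [Finite V] (G : SimpleGraph V)
    (hG : IsPalindromic G ∨ IsAntipalindromic G) :
    ∃ M : G.Subgraph, M.IsPerfectMatching := by
  letI := Fintype.ofFinite V
  letI := Classical.decEq V
  letI := Classical.decRel G.Adj
  by_contra hpm
  push_neg at hpm
  -- the characteristic polynomial
  have hcp : charPoly G = (SimpleGraph.adjMatrix ℤ G).charpoly := rfl
  have hn : Nat.card V = Fintype.card V := Nat.card_eq_fintype_card
  have hdeg : (charPoly G).natDegree = Fintype.card V := by
    rw [hcp]; exact Matrix.charpoly_natDegree_eq_dim _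
  have hlead : (charPoly G).coeff (Fintype.card V) = 1 := by
    rw [← hdeg]
    exact (Matrix.charpoly_monic _).coeff_natDegree
  have hc0 : (charPoly G).coeff 0 = 1 ∨ (charPoly G).coeff 0 = -1 := by
    rcases hG with h | h
    · left; have := h 0 (Nat.zero_le _); rwa [Nat.sub_zero, hn, hlead] at this
    · right; have := h 0 (Nat.zero_le _); rwa [Nat.sub_zero, hn, hlead] at this
  -- determinant over ℤ is ±1
  have hdet : (SimpleGraph.adjMatrix ℤ G).det =
      (-1) ^ Fintype.card V * (charPoly G).coeff 0 := by
    rw [hcp]; exact Matrix.det_eq_sign_charpoly_coeff _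
  -- push to ZMod 2
  have hmap : (SimpleGraph.adjMatrix ℤ G).map (Int.castRingHom (ZMod 2)) =
      SimpleGraph.adjMatrix (ZMod 2) G := by
    ext i j
    simp [SimpleGraph.adjMatrix_apply, apply_ite (Int.cast : ℤ → ZMod 2)]
  have hz : (SimpleGraph.adjMatrix (ZMod 2) G).det = 1 := by
    have hmd := RingHom.map_det (Int.castRingHom (ZMod 2)) (SimpleGraph.adjMatrix ℤ G)
    rw [RingHom.mapMatrix_apply, hmap] at hmd
    rw [← hmd, hdet, map_mul, map_pow, map_neg, map_one]
    have h1 : (-1 : ZMod 2) = 1 := by decide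
    rw [h1, one_pow, one_mul]
    rcases hc0 with h | h <;> rw [h] <;> simp [h1]
  rw [det_adjMatrix_eq_zero G hpm] at hz
  exact absurd hz (by decide)
end

section
/- Every finite tree that is palindromic or antipalindromic has exactly one perfect matching. -/
open Polynomial

section Aux

variable {V : Type*} [Fintype V] [DecidableEq V] {G : SimpleGraph V}

/-- The walk `v, f v, f (f v), …, f^[k] v` along iterates of `f`. -/
def iterWalk (f : V → V) (h : ∀ v, G.Adj v (f v)) (v : V) :
    (k : ℕ) → G.Walk v (f^[k] v)
  | 0 => SimpleGraph.Walk.nil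
  | (k+1) => (iterWalk f h v k).concat
      (by rw [Function.iterate_succ_apply']; exact h (f^[k] v))

lemma iterWalk_support (f : V → V) (h : ∀ v, G.Adj v (f v)) (v : V) (k : ℕ) :
    (iterWalk f h v k).support = (List.range (k+1)).map (fun i => f^[i] v) := by
  induction k with
  | zero => simp [iterWalk]
  | succ k ih =>
      rw [iterWalk, SimpleGraph.Walk.support_concat, ih]
      simp [List.range_succ]

lemma iterWalk_edges (f : V → V) (h : ∀ v, G.Adj v (f v)) (v : V) (k : ℕ) :
    (iterWalk f h v k).edges = (List.range k).map (fun i => s(f^[i] v, f^[i+1] v)) := by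
  induction k with
  | zero => simp [iterWalk]
  | succ k ih =>
      rw [iterWalk, SimpleGraph.Walk.edges_concat, ih]
      simp [List.range_succ]

/-- In an acyclic graph, any permutation moving every vertex to a neighbor is an involution. -/
lemma invol_of_acyclic (hG : G.IsAcyclic) (σ : Equiv.Perm V)
    (hσ : ∀ v, G.Adj v (σ v)) (v : V) : σ (σ v) = v := by
  by_contra hvv
  have hkey : ∀ k, σ ((⇑σ)^[k] v) = (⇑σ)^[k+1] v :=
    fun k => (Function.iterate_succ_apply' (⇑σ) k v).symm
  have hper : Function.IsPeriodicPt (⇑σ) (orderOf σ) v := by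
    show (⇑σ)^[orderOf σ] v = v
    rw [Equiv.Perm.iterate_eq_pow, pow_orderOf_eq_one]
    rfl
  set n := Function.minimalPeriod (⇑σ) v with hn
  have hn0 : 0 < n := hper.minimalPeriod_pos (orderOf_pos σ)
  have hfn : (⇑σ)^[n] v = v := Function.iterate_minimalPeriod
  have hinj : Set.InjOn ((⇑σ)^[·] v) (Set.Iio n) :=
    Function.iterate_injOn_Iio_minimalPeriod
  have hne1 : n ≠ 1 := by
    intro h
    have := hfn
    rw [h] at this
    simp only [Function.iterate_one] at this
    exact (hσ v).ne' this
  have hne2 : n ≠ 2 := by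
    intro h
    have := hfn
    rw [h] at this
    simp only [Function.iterate_succ, Function.iterate_one, Function.comp_apply] at this
    exact hvv this
  have hn3 : 3 ≤ n := by omega
  set p := iterWalk (⇑σ) hσ v (n-1) with hp
  have hpath : p.IsPath := by
    rw [SimpleGraph.Walk.isPath_def, hp, iterWalk_support, (by omega : n - 1 + 1 = n)]
    refine List.Nodup.map_on ?_ (List.nodup_range (n := n))
    intro i hi j hj hij
    exact hinj (Set.mem_Iio.mpr (List.mem_range.mp hi))
      (Set.mem_Iio.mpr (List.mem_range.mp hj)) hij
  have hadj : G.Adj ((⇑σ)^[n-1] v) v := by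
    have h1 := hσ ((⇑σ)^[n-1] v)
    rwa [hkey, (by omega : n - 1 + 1 = n), hfn] at h1
  have hcyc : (SimpleGraph.Walk.cons hadj p).IsCycle := by
    rw [SimpleGraph.Walk.cons_isCycle_iff]
    refine ⟨hpath, ?_⟩
    rw [hp, iterWalk_edges]
    intro hmem
    obtain ⟨i, hi, heq⟩ := List.mem_map.mp hmem
    have hi' : i < n - 1 := List.mem_range.mp hi
    rw [Sym2.eq_iff] at heq
    rcases heq with ⟨h1, h2⟩ | ⟨h1, h2⟩
    · have : i = n - 1 := hinj (Set.mem_Iio.mpr (by omega)) (Set.mem_Iio.mpr (by omega)) h1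
      omega
    · have hi0 : i = 0 :=
        hinj (Set.mem_Iio.mpr (by omega)) (Set.mem_Iio.mpr (by omega)) h1
      rw [hi0] at h2
      have : 0 + 1 = n - 1 :=
        hinj (Set.mem_Iio.mpr (by omega)) (Set.mem_Iio.mpr (by omega)) h2
      omega
  exact hG _ hcyc

/-- Fixed-point free involutions on a fintype all have the same sign. -/
lemma sign_invol_eq (σ τ : Equiv.Perm V) (hσ : σ * σ = 1) (hσf : ∀ v, σ v ≠ v)
    (hτ : τ * τ = 1) (hτf : ∀ v, τ v ≠ v) :
    Equiv.Perm.sign σ = Equiv.Perm.sign τ := by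
  suffices h : ∀ ρ : Equiv.Perm V, ρ * ρ = 1 → (∀ v, ρ v ≠ v) →
      ρ.cycleType = Multiset.replicate (Fintype.card V / 2) 2 by
    rw [Equiv.Perm.sign_of_cycleType, Equiv.Perm.sign_of_cycleType,
      h σ hσ hσf, h τ hτ hτf]
  intro ρ h1 h2
  have hall : ∀ x ∈ ρ.cycleType, x = 2 := by
    intro x hx
    have h2x := Equiv.Perm.two_le_of_mem_cycleType hx
    have hdvd : x ∣ orderOf ρ := by
      rw [← Equiv.Perm.lcm_cycleType]; exact Multiset.dvd_lcm hx
    have ho2 : orderOf ρ ∣ 2 := orderOf_dvd_of_pow_eq_one (by rw [pow_two]; exact h1)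
    exact Nat.le_antisymm (Nat.le_of_dvd two_pos (hdvd.trans ho2)) h2x
  have hrep : ρ.cycleType = Multiset.replicate (Multiset.card ρ.cycleType) 2 :=
    Multiset.eq_replicate_card.mpr hall
  have hsupp : ρ.support = Finset.univ :=
    Finset.eq_univ_iff_forall.mpr (fun v => Equiv.Perm.mem_support.mpr (h2 v))
  have hsum : ρ.cycleType.sum = Fintype.card V := by
    rw [Equiv.Perm.sum_cycleType, hsupp, Finset.card_univ]
  rw [hrep, Multiset.sum_replicate, smul_eq_mul] at hsum
  rw [hrep, (by omega : Multiset.card ρ.cycleType = Fintype.card V / 2)]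

/-- The perfect matching associated to an involutive neighbor-permutation. -/
def permMatching (G : SimpleGraph V) (σ : Equiv.Perm V) (hadj : ∀ v, G.Adj v (σ v))
    (hinv : ∀ v, σ (σ v) = v) : G.Subgraph where
  verts := Set.univ
  Adj a b := σ a = b
  adj_sub := fun {a b} h => h ▸ hadj a
  edge_vert := fun _ => trivial
  symm := ⟨fun a b h => by rw [← h]; exact hinv a⟩

lemma permMatching_isPerfectMatching (G : SimpleGraph V) (σ : Equiv.Perm V)
    (hadj : ∀ v, G.Adj v (σ v)) (hinv : ∀ v, σ (σ v) = v) :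
    (permMatching G σ hadj hinv).IsPerfectMatching :=
  ⟨fun v _ => ⟨σ v, rfl, fun y hy => Eq.symm (hy : σ v = y)⟩, fun _ => trivial⟩

/-- The partner function of a perfect matching. -/
noncomputable def pmFun (M : G.Subgraph) (hM : M.IsPerfectMatching) (v : V) : V :=
  ((SimpleGraph.Subgraph.isPerfectMatching_iff.mp hM) v).choose

lemma pmFun_adj (M : G.Subgraph) (hM : M.IsPerfectMatching) (v : V) :
    M.Adj v (pmFun M hM v) :=
  ((SimpleGraph.Subgraph.isPerfectMatching_iff.mp hM) v).choose_spec.1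

lemma pmFun_eq (M : G.Subgraph) (hM : M.IsPerfectMatching) {v w : V} (h : M.Adj v w) :
    pmFun M hM v = w :=
  (((SimpleGraph.Subgraph.isPerfectMatching_iff.mp hM) v).choose_spec.2 w h).symm

lemma pmFun_invol (M : G.Subgraph) (hM : M.IsPerfectMatching) :
    Function.Involutive (pmFun M hM) :=
  fun v => pmFun_eq M hM (pmFun_adj M hM v).symm

end Aux

/-- Every finite tree that is palindromic or antipalindromic
has exactly one perfect matching. -/
theorem palindromic_tree_unique_perfect_matching {V : Type*} [Finite V] (T : SimpleGraph V)
    (hT : T.IsTree) (hpal : IsPalindromic T ∨ IsAntipalindromic T) :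
    ∃! M : T.Subgraph, M.IsPerfectMatching := by
  letI := Fintype.ofFinite V
  letI := Classical.decEq V
  letI := Classical.decRel T.Adj
  set n := Fintype.card V with hn
  have hnat : Nat.card V = n := Nat.card_eq_fintype_card
  set A := SimpleGraph.adjMatrix ℤ T with hA
  have hcp : charPoly T = A.charpoly := rfl
  have hdeg : A.charpoly.natDegree = n := Matrix.charpoly_natDegree_eq_dim A
  have hcoeffn : A.charpoly.coeff n = 1 := by
    have hm := Matrix.charpoly_monic A
    rw [Polynomial.Monic, Polynomial.leadingCoeff, hdeg] at hm
    exact hm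
  have hc0 : A.charpoly.coeff 0 = 1 ∨ A.charpoly.coeff 0 = -1 := by
    rcases hpal with h | h
    · left
      have := h 0 (Nat.zero_le _)
      rwa [hnat, Nat.sub_zero, hcp, hcoeffn] at this
    · right
      have := h 0 (Nat.zero_le _)
      rwa [hnat, Nat.sub_zero, hcp, hcoeffn] at this
  have hdet : A.det = 1 ∨ A.det = -1 := by
    rw [← Int.isUnit_iff, Matrix.det_eq_sign_charpoly_coeff]
    refine IsUnit.mul (IsUnit.pow _ isUnit_one.neg) ?_
    rcases hc0 with h | h <;> rw [h]
    · exact isUnit_one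
    · exact isUnit_one.neg
  set S : Finset (Equiv.Perm V) := Finset.univ.filter (fun σ => ∀ i, T.Adj i (σ i)) with hS
  have hterm : ∀ σ : Equiv.Perm V,
      (∏ i, A (σ i) i) = if (∀ i, T.Adj i (σ i)) then (1 : ℤ) else 0 := by
    intro σ
    by_cases h : ∀ i, T.Adj i (σ i)
    · rw [if_pos h]
      apply Finset.prod_eq_one
      intro i _
      rw [hA, SimpleGraph.adjMatrix_apply, if_pos ((h i).symm)]
    · rw [if_neg h]
      push_neg at h
      obtain ⟨i, hi⟩ := h
      apply Finset.prod_eq_zero (Finset.mem_univ i)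
      rw [hA, SimpleGraph.adjMatrix_apply, if_neg (fun hc => hi hc.symm)]
  have hdetsum : A.det = ∑ σ ∈ S, (Equiv.Perm.sign σ : ℤ) := by
    rw [Matrix.det_apply, hS, Finset.sum_filter]
    apply Finset.sum_congr rfl
    intro σ _
    rw [hterm]
    by_cases h : ∀ i, T.Adj i (σ i)
    · rw [if_pos h, if_pos h]
      simp [Units.smul_def]
    · rw [if_neg h, if_neg h]
      simp
  have hSne : S.Nonempty := by
    rcases Finset.eq_empty_or_nonempty S with h | h
    · exfalso
      rw [h, Finset.sum_empty] at hdetsum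
      rcases hdet with h' | h' <;> omega
    · exact h
  obtain ⟨σ₀, hσ₀S⟩ := hSne
  have hσ₀adj : ∀ i, T.Adj i (σ₀ i) := (Finset.mem_filter.mp hσ₀S).2
  have hinvS : ∀ σ ∈ S, ∀ v, σ (σ v) = v := by
    intro σ hσ
    exact invol_of_acyclic hT.2 σ (Finset.mem_filter.mp hσ).2
  have hmulS : ∀ σ ∈ S, σ * σ = 1 := by
    intro σ hσ
    ext v
    simp [Equiv.Perm.mul_apply, hinvS σ hσ v]
  have hfpS : ∀ σ ∈ S, ∀ v, σ v ≠ v := by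
    intro σ hσ v
    exact ((Finset.mem_filter.mp hσ).2 v).ne'
  have hsigneq : ∀ σ ∈ S, (Equiv.Perm.sign σ : ℤ) = (Equiv.Perm.sign σ₀ : ℤ) := by
    intro σ hσ
    exact_mod_cast congrArg (Units.val)
      (sign_invol_eq σ σ₀ (hmulS σ hσ) (hfpS σ hσ) (hmulS σ₀ hσ₀S) (hfpS σ₀ hσ₀S))
  have hdet2 : A.det = (Equiv.Perm.sign σ₀ : ℤ) * S.card := by
    rw [hdetsum, Finset.sum_congr rfl hsigneq, Finset.sum_const, nsmul_eq_mul, mul_comm]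
  have hcard : S.card = 1 := by
    have hsign : (Equiv.Perm.sign σ₀ : ℤ) = 1 ∨ (Equiv.Perm.sign σ₀ : ℤ) = -1 :=
      Int.isUnit_iff.mp (Equiv.Perm.sign σ₀).isUnit
    rcases hdet with h | h <;> rcases hsign with h' | h' <;>
        rw [hdet2, h'] at h <;> [skip; skip; skip; skip] <;> omega
  have hSeq : S = {σ₀} := by
    obtain ⟨a, ha⟩ := Finset.card_eq_one.mp hcard
    rw [ha] at hσ₀S ⊢
    rw [Finset.mem_singleton.mp hσ₀S]
  have hmemS : ∀ σ ∈ S, σ = σ₀ := fun σ h => by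
    rw [hSeq] at h; exact Finset.mem_singleton.mp h
  have hinv₀ : ∀ v, σ₀ (σ₀ v) = v := hinvS σ₀ hσ₀S
  refine ⟨permMatching T σ₀ hσ₀adj hinv₀,
    permMatching_isPerfectMatching T σ₀ hσ₀adj hinv₀, ?_⟩
  intro M hM
  set σM : Equiv.Perm V := (pmFun_invol M hM).toPerm with hσM
  have hσMapp : ∀ v, σM v = pmFun M hM v := fun v => rfl
  have hσMS : σM ∈ S := by
    rw [hS, Finset.mem_filter]
    exact ⟨Finset.mem_univ _, fun i => M.adj_sub (by rw [hσMapp]; exact pmFun_adj M hM i)⟩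
  have hσMσ₀ : σM = σ₀ := hmemS σM hσMS
  have hverts : M.verts = (permMatching T σ₀ hσ₀adj hinv₀).verts :=
    Set.eq_univ_of_forall hM.2
  have hAdj : ∀ a b, M.Adj a b ↔ (permMatching T σ₀ hσ₀adj hinv₀).Adj a b := by
    intro a b
    show M.Adj a b ↔ σ₀ a = b
    constructor
    · intro h
      rw [← hσMσ₀, hσMapp]
      exact pmFun_eq M hM h
    · intro h
      have hb : b = σM a := by rw [hσMσ₀]; exact h.symm
      rw [hb, hσMapp]
      exact pmFun_adj M hM a
  exact SimpleGraph.Subgraph.ext hverts (by ext a b; exact hAdj a b)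
end

section
/- Every finite simple graph that is palindromic or antipalindromic has an even number of vertices. -/
open Polynomial


lemma det_zero_of_symm_diag_zero_odd {V : Type*} [Fintype V] [DecidableEq V]
    (M : Matrix V V (ZMod 2)) (hsymm : ∀ i j, M i j = M j i) (hdiag : ∀ i, M i i = 0)
    (hodd : Odd (Fintype.card V)) : M.det = 0 := by
  haveI : Fact (Nat.Prime 2) := ⟨Nat.prime_two⟩
  rw [Matrix.det_apply]
  apply Finset.sum_involution (fun σ _ => σ⁻¹)
  · intro σ _
    have hprod : (∏ i, M (σ⁻¹ i) i) = ∏ i, M (σ i) i := by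
      rw [← Equiv.prod_comp σ (fun i => M (σ⁻¹ i) i)]
      simp only [Equiv.Perm.coe_inv, Equiv.symm_apply_apply]
      exact Finset.prod_congr rfl fun i _ => hsymm i (σ i)
    rw [Equiv.Perm.sign_inv, hprod]
    rcases Int.units_eq_one_or (Equiv.Perm.sign σ) with h | h <;>
      simp [h, Units.smul_def, CharTwo.add_self_eq_zero]
  · intro σ _ hne
    intro heq
    apply hne
    have hσ2 : σ ^ 2 = 1 := by
      rw [pow_two]
      nth_rewrite 2 [← heq]
      exact mul_inv_cancel σ
    have h2 : ¬ (2 ∣ Fintype.card V) := by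
      rw [Nat.odd_iff] at hodd; omega
    obtain ⟨a, ha⟩ := Equiv.Perm.exists_fixed_point_of_prime h2 (n := 1) (by simpa using hσ2)
    have : (∏ i, M (σ i) i) = 0 := Finset.prod_eq_zero (Finset.mem_univ a) (by rw [ha]; exact hdiag a)
    rw [this, smul_zero]
  · intro σ _; exact inv_inv σ
  · intro σ _; exact Finset.mem_univ _


/-- Every finite simple graph that is palindromic or antipalindromic
has an even number of vertices. -/
theorem palindromic_even_order {V : Type*} [Finite V] (G : SimpleGraph V)
    (hG : IsPalindromic G ∨ IsAntipalindromic G) :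
    Even (Nat.card V) := by
  letI := Fintype.ofFinite V
  letI := Classical.decEq V
  letI := Classical.decRel G.Adj
  by_contra hodd
  rw [Nat.not_even_iff_odd] at hodd
  have hcard : Nat.card V = Fintype.card V := Nat.card_eq_fintype_card
  have hch : charPoly G = (SimpleGraph.adjMatrix ℤ G).charpoly := rfl
  have hlead : (charPoly G).coeff (Nat.card V) = 1 := by
    rw [hch, hcard, ← Matrix.charpoly_natDegree_eq_dim (SimpleGraph.adjMatrix ℤ G)]
    exact (SimpleGraph.adjMatrix ℤ G).charpoly_monic.coeff_natDegree
  have hc0 : (charPoly G).coeff 0 = 1 ∨ (charPoly G).coeff 0 = -1 := by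
    rcases hG with h | h
    · left
      have := h 0 (Nat.zero_le _)
      rwa [Nat.sub_zero, hlead] at this
    · right
      have := h 0 (Nat.zero_le _)
      rwa [Nat.sub_zero, hlead] at this
  -- the determinant of the adjacency matrix mod 2 is zero, since the card is odd
  have hdetmap : ((SimpleGraph.adjMatrix ℤ G).map (Int.cast : ℤ → ZMod 2)).det = 0 := by
    have hmap : (SimpleGraph.adjMatrix ℤ G).map (Int.cast : ℤ → ZMod 2)
        = SimpleGraph.adjMatrix (ZMod 2) G := by
      ext i j
      simp [Matrix.map_apply, SimpleGraph.adjMatrix_apply, apply_ite (Int.cast : ℤ → ZMod 2)]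
    rw [hmap]
    refine det_zero_of_symm_diag_zero_odd _ (fun i j => ?_) (fun i => ?_) (hcard ▸ hodd)
    · simp [SimpleGraph.adjMatrix_apply, SimpleGraph.adj_comm]
    · simp [SimpleGraph.adjMatrix_apply]
  have hdet : ((((SimpleGraph.adjMatrix ℤ G).det : ℤ) : ZMod 2)) = 0 := by
    have h := RingHom.map_det (Int.castRingHom (ZMod 2)) (SimpleGraph.adjMatrix ℤ G)
    simp only [Int.coe_castRingHom] at h
    rw [h]
    exact hdetmap
  have hdd := Matrix.det_eq_sign_charpoly_coeff (SimpleGraph.adjMatrix ℤ G)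
  rw [← hch] at hdd
  have : (((charPoly G).coeff 0 : ℤ) : ZMod 2) = 0 := by
    have := congrArg (fun x : ℤ => (x : ZMod 2)) hdd
    simp only [Int.cast_mul, Int.cast_pow, Int.cast_neg, Int.cast_one] at this
    rw [hdet] at this
    have hone : ((-1 : ZMod 2)) = 1 := by decide
    rw [hone, one_pow, one_mul] at this
    exact this.symm
  rcases hc0 with h | h <;> rw [h] at this <;> simp at this
end

section
/- Let G be a finite simple graph on n vertices and H(G) its hairing. Then for every nonzero real number λ, χ_{H(G)}(λ) = λ^n · χ_G(λ − 1/λ), where χ denotes the characteristic polynomial of the adjacency matrix. -/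
open Polynomial

/-- The hairing of `G`: attach a pendant vertex to every vertex of `G`.
Vertices `(u, false)` form the original graph and `(u, true)` is the pendant at `u`. -/
def hairing {V : Type*} (G : SimpleGraph V) : SimpleGraph (V × Bool) where
  Adj a b := (a.2 = false ∧ b.2 = false ∧ G.Adj a.1 b.1) ∨ (a.1 = b.1 ∧ a.2 ≠ b.2)
  symm := by
    constructor
    rintro a b (⟨ha, hb, hadj⟩ | ⟨h1, h2⟩)
    · exact Or.inl ⟨hb, ha, hadj.symm⟩
    · exact Or.inr ⟨h1.symm, h2.symm⟩
  loopless := by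
    constructor
    rintro a (⟨_, _, hadj⟩ | ⟨_, h⟩)
    · exact G.irrefl hadj
    · exact h rfl

/-!
Listing the original vertices first and the pendants second, the adjacency matrix of the
hairing is the block matrix `[[A, 1], [1, 0]]`. For `λ ≠ 0` the lower right block of
`λ - [[A, 1], [1, 0]]` is the invertible `λ • 1`, whose Schur complement is `(λ - λ⁻¹) - A`.
-/

namespace Matrix

variable {n : Type*} [Fintype n] [DecidableEq n]

lemma scalar_sub_fromBlocks {R : Type*} [CommRing R] (A : Matrix n n R) (t : R) :
    scalar (n ⊕ n) t - fromBlocks A 1 1 0 =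
      fromBlocks (scalar n t - A) (-1) (-1) (scalar n t) := by
  ext (i | i) (j | j) <;> simp [sub_eq_neg_add, diagonal_apply]

theorem eval_charpoly_fromBlocks_one_one_zero {K : Type*} [Field K] (A : Matrix n n K) {t : K}
    (ht : t ≠ 0) :
    (fromBlocks A (1 : Matrix n n K) 1 0).charpoly.eval t =
      t ^ Fintype.card n * A.charpoly.eval (t - t⁻¹) := by
  let := invertibleOfNonzero ht
  let : Invertible (scalar n t) := Invertible.map (scalar n) t
  have hinv : ⅟(scalar n t) = scalar n t⁻¹ := by rw [← map_invOf, invOf_eq_inv]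
  rw [eval_charpoly, eval_charpoly, scalar_sub_fromBlocks, det_fromBlocks₂₂, hinv]
  have hschur : scalar n t - A - (-1 : Matrix n n K) * scalar n t⁻¹ * -1 =
      scalar n (t - t⁻¹) - A := by
    rw [neg_one_mul, Matrix.mul_neg, Matrix.mul_one, neg_neg, map_sub]
    abel
  rw [hschur]
  simp only [scalar_apply, det_diagonal, Finset.prod_const, Finset.card_univ]

end Matrix

section

variable {V : Type*} (G : SimpleGraph V)

lemma charPoly_eq_charpoly_adjMatrix [Fintype V] [DecidableEq V] [DecidableRel G.Adj] :
    charPoly G = (G.adjMatrix ℤ).charpoly := by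
  unfold charPoly
  convert rfl

lemma aeval_charPoly [Fintype V] [DecidableEq V] [DecidableRel G.Adj] {R : Type*} [CommRing R]
    (r : R) : aeval r (charPoly G) = (G.adjMatrix R).charpoly.eval r := by
  rw [charPoly_eq_charpoly_adjMatrix, aeval_def, eval₂_eq_eval_map, ← Matrix.charpoly_map]
  congr
  ext i j
  by_cases h : G.Adj i j <;> simp [h]

def hairingEquiv (V : Type*) : V × Bool ≃ V ⊕ V :=
  (Equiv.prodComm V Bool).trans (Equiv.boolProdEquivSum V)

lemma reindex_adjMatrix_hairing [DecidableEq V] [DecidableRel G.Adj] {R : Type*} [Zero R] [One R]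
    [DecidableRel (hairing G).Adj] :
    Matrix.reindex (hairingEquiv V) (hairingEquiv V) ((hairing G).adjMatrix R) =
      Matrix.fromBlocks (G.adjMatrix R) 1 1 0 := by
  ext (i | i) (j | j) <;> simp [hairingEquiv, hairing, Matrix.one_apply]

end

/-- For a finite simple graph `G` on `n` vertices and every nonzero real `λ`,
`χ_{H(G)}(λ) = λ^n · χ_G(λ - 1/λ)`. -/
theorem charPoly_hairing_eval {V : Type*} [Finite V] (G : SimpleGraph V)
    (lam : ℝ) (hlam : lam ≠ 0) :
    Polynomial.aeval lam (charPoly (hairing G)) =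
      lam ^ Nat.card V * Polynomial.aeval (lam - 1 / lam) (charPoly G) := by
  classical
  cases nonempty_fintype V
  rw [aeval_charPoly, aeval_charPoly, ← Matrix.charpoly_reindex (hairingEquiv V),
    reindex_adjMatrix_hairing, Matrix.eval_charpoly_fromBlocks_one_one_zero _ hlam,
    Nat.card_eq_fintype_card, one_div]
end

section
/- Let G be a finite simple graph on n vertices and write the characteristic polynomial of its hairing as χ_{H(G)}(λ) = Σ_{i=0}^{2n} a_i λ^{2n−i}. Then a_i = (−1)^{n+i} a_{2n−i} for all 0 ≤ i ≤ 2n. -/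
open Polynomial

/-!
Reindexing `V × Bool` as `V ⊕ V` turns the adjacency matrix of `H(G)` into
`N = [[A, 1], [1, 0]]`. Right-multiplying `λ - N` by `[[λ, 0], [1, 1]]` makes it block
triangular, and cancelling `λ^n` gives `χ_N(λ) = det (λ (λ - A) - 1)`. On the other hand, the
Schur complement of the identity block of `1 - λ N` gives
`λ^{2n} χ_N(1/λ) = det (1 - λ A - λ²) = (-1)^n χ_N(-λ)`, and comparing coefficients of the two
sides gives the symmetry.
-/

namespace Polynomial

variable {R : Type*} [CommRing R]

theorem coeff_comp_neg_X (p : R[X]) (i : ℕ) : (p.comp (-X)).coeff i = (-1) ^ i * p.coeff i := by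
  simpa [mul_comm] using comp_C_mul_X_coeff (p := p) (r := -1) (n := i)

theorem coeff_natDegree_sub_of_reverse_eq {p : R[X]} {m : ℕ}
    (hp : p.reverse = C ((-1) ^ m) * p.comp (-X)) {i : ℕ} (hi : i ≤ p.natDegree) :
    p.coeff (p.natDegree - i) = (-1) ^ (m + i) * p.coeff i := by
  rw [← revAt_le hi, ← coeff_reverse, hp, coeff_C_mul, coeff_comp_neg_X, pow_add, mul_assoc]

end Polynomial

namespace Matrix

variable {R n : Type*} [CommRing R] [Fintype n] [DecidableEq n]

theorem charpoly_fromBlocks_one_one_zero (A : Matrix n n R) :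
    (fromBlocks A 1 1 (0 : Matrix n n R)).charpoly = det ((X : R[X]) • charmatrix A - 1) := by
  apply (isRegular_X_pow (R := R) (Fintype.card n)).left
  have hprod :
      charmatrix (fromBlocks A 1 1 (0 : Matrix n n R)) * fromBlocks ((X : R[X]) • 1) 0 1 1 =
        fromBlocks ((X : R[X]) • charmatrix A - 1) (-1) 0 ((X : R[X]) • 1) := by
    rw [charmatrix_fromBlocks, fromBlocks_multiply]
    simp [sub_eq_add_neg, ← smul_one_eq_diagonal]
  have := congrArg det hprod
  simp only [det_mul, det_fromBlocks_zero₁₂, det_fromBlocks_zero₂₁, det_smul, det_one,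
    mul_one] at this
  simp only [charpoly]
  linear_combination this

theorem det_comp (M : Matrix n n R[X]) (q : R[X]) :
    (det M).comp q = det (M.map fun p => p.comp q) :=
  RingHom.map_det (compRingHom q) M

theorem reverse_charpoly_fromBlocks_one_one_zero (A : Matrix n n R) :
    (fromBlocks A 1 1 (0 : Matrix n n R)).charpoly.reverse =
      C ((-1) ^ Fintype.card n) * (fromBlocks A 1 1 (0 : Matrix n n R)).charpoly.comp (-X) := by
  have hrev : 1 - (X : R[X]) • (fromBlocks A 1 1 (0 : Matrix n n R)).map C =
      fromBlocks (1 - (X : R[X]) • A.map C) (-((X : R[X]) • 1)) (-((X : R[X]) • 1)) 1 := by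
    rw [fromBlocks_map, ← fromBlocks_one, fromBlocks_smul, sub_eq_add_neg, fromBlocks_neg,
      fromBlocks_add]
    simp [sub_eq_add_neg]
  have hcomp : ((X : R[X]) • charmatrix A - 1).map (fun p => p.comp (-X)) =
      (X : R[X]) • ((X : R[X]) • 1 + A.map C) - 1 := by
    ext i j : 1
    by_cases h : i = j
    · subst h
      simp only [map_apply, sub_apply, smul_apply, charmatrix_apply_eq, smul_eq_mul, one_apply_eq,
        sub_comp, mul_comp, X_comp, C_comp, one_comp, add_apply, smul_add, mul_one]
      ring
    · simp [h]
  have hneg : 1 - (X : R[X]) • A.map C - -((X : R[X]) • 1) * -((X : R[X]) • 1) =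
      -((X : R[X]) • ((X : R[X]) • 1 + A.map C) - 1) := by
    simp only [neg_mul_neg, smul_mul_smul_comm, mul_one, smul_add, smul_smul]
    abel
  rw [reverse_charpoly, charpolyRev, hrev, det_fromBlocks_one₂₂,
    charpoly_fromBlocks_one_one_zero, det_comp, hcomp, hneg, det_neg]
  simp

end Matrix

namespace SimpleGraph

variable {V : Type*} (G : SimpleGraph V)

theorem hairing_adjMatrix_reindex {α : Type*} [Zero α] [One α] [DecidableEq V]
    [DecidableRel G.Adj] [DecidableRel (hairing G).Adj] :
    Matrix.reindex ((Equiv.prodComm V Bool).trans (Equiv.boolProdEquivSum V))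
        ((Equiv.prodComm V Bool).trans (Equiv.boolProdEquivSum V)) ((hairing G).adjMatrix α) =
      Matrix.fromBlocks (G.adjMatrix α) 1 1 0 := by
  ext (u | u) (v | v) <;> simp [hairing, Matrix.one_apply]

theorem charPoly_hairing [Fintype V] [DecidableEq V] [DecidableRel G.Adj] :
    charPoly (hairing G) =
      (Matrix.fromBlocks (G.adjMatrix ℤ) 1 1 (0 : Matrix V V ℤ)).charpoly := by
  classical
  rw [← hairing_adjMatrix_reindex, Matrix.charpoly_reindex, charPoly]
  congr!

end SimpleGraph

/-- Writing `χ_{H(G)}(λ) = Σ_{i=0}^{2n} a_i λ^(2n-i)`, we have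
`a_i = (-1)^(n+i) a_(2n-i)` for all `0 ≤ i ≤ 2n`. -/
theorem charPoly_hairing_coeff_symmetry {V : Type*} [Finite V] (G : SimpleGraph V) :
    ∀ i ≤ 2 * Nat.card V,
      (charPoly (hairing G)).coeff (2 * Nat.card V - i) =
        (-1 : ℤ) ^ (Nat.card V + i) * (charPoly (hairing G)).coeff i := by
  classical
  cases nonempty_fintype V
  have hdeg : (charPoly (hairing G)).natDegree = 2 * Nat.card V := by
    rw [SimpleGraph.charPoly_hairing, Matrix.charpoly_natDegree_eq_dim, Fintype.card_sum,
      Nat.card_eq_fintype_card, two_mul]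
  intro i hi
  rw [← hdeg] at hi ⊢
  refine Polynomial.coeff_natDegree_sub_of_reverse_eq ?_ hi
  rw [SimpleGraph.charPoly_hairing, Matrix.reverse_charpoly_fromBlocks_one_one_zero,
    Nat.card_eq_fintype_card]
end

section
/- Every palindromic finite tree has a number of vertices divisible by 4, and every antipalindromic finite tree has a number of vertices congruent to 2 modulo 4. -/
open Polynomial

open Polynomial SimpleGraph Equiv

section Aux

variable {V : Type*} [Fintype V] [DecidableEq V] {G : SimpleGraph V} [DecidableRel G.Adj]

/-- Walk along the orbit of `σ`. -/
noncomputable def orbitWalk (G : SimpleGraph V) (σ : Equiv.Perm V)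
    (hσ : ∀ v, G.Adj (σ v) v) (v : V) : (m : ℕ) → G.Walk v ((⇑σ)^[m] v)
  | 0 => SimpleGraph.Walk.nil
  | m + 1 => (orbitWalk G σ hσ v m).concat (by
      rw [Function.iterate_succ_apply']
      exact (hσ _).symm)

lemma orbitWalk_length (σ : Equiv.Perm V) (hσ : ∀ v, G.Adj (σ v) v) (v : V) (m : ℕ) :
    (orbitWalk G σ hσ v m).length = m := by
  induction m with
  | zero => rfl
  | succ m ih => rw [orbitWalk, SimpleGraph.Walk.length_concat, ih]

lemma orbitWalk_support (σ : Equiv.Perm V) (hσ : ∀ v, G.Adj (σ v) v) (v : V) (m : ℕ) :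
    (orbitWalk G σ hσ v m).support = (List.range (m + 1)).map (fun i => (⇑σ)^[i] v) := by
  induction m with
  | zero =>
      simp only [orbitWalk, SimpleGraph.Walk.support_nil]
      rw [List.range_succ]
      rfl
  | succ m ih =>
      rw [orbitWalk, SimpleGraph.Walk.support_concat, ih, List.range_succ (n := m + 1),
        List.map_append]
      rfl

lemma perm_involution (hA : G.IsAcyclic) (σ : Equiv.Perm V)
    (hσ : ∀ v, G.Adj (σ v) v) : ∀ v, σ (σ v) = v := by
  intro v
  by_contra hvv
  have hfix : ∀ w, σ w ≠ w := fun w h => G.irrefl (h ▸ hσ w)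
  set k := Function.minimalPeriod (⇑σ) v with hk
  have hper : Function.IsPeriodicPt (⇑σ) (orderOf σ) v := by
    show (⇑σ)^[orderOf σ] v = v
    rw [← Equiv.Perm.coe_pow, pow_orderOf_eq_one σ]
    rfl
  have hkpos : 0 < k := hper.minimalPeriod_pos (orderOf_pos σ)
  have hkv : (⇑σ)^[k] v = v := Function.iterate_minimalPeriod
  have hk1 : k ≠ 1 := fun h => hfix v (by simpa [h] using hkv)
  have hk2 : k ≠ 2 := fun h => hvv (by
    have := hkv
    rw [h] at this
    simpa [Function.iterate_succ_apply'] using this)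
  have hk3 : 3 ≤ k := by omega
  have hinj : Set.InjOn (fun i => (⇑σ)^[i] v) (Set.Iio k) :=
    Function.iterate_injOn_Iio_minimalPeriod
  -- the long path along the orbit
  have hnodup : (orbitWalk G σ hσ v (k - 1)).support.Nodup := by
    rw [orbitWalk_support]
    refine List.Nodup.map_on ?_ List.nodup_range
    intro x hx y hy hxy
    exact hinj (by simp at hx ⊢; omega) (by simp at hy ⊢; omega) hxy
  let p1 : G.Path v ((⇑σ)^[k - 1] v) :=
    ⟨orbitWalk G σ hσ v (k - 1), (SimpleGraph.Walk.isPath_def _).2 hnodup⟩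
  have hadj : G.Adj v ((⇑σ)^[k - 1] v) := by
    have h := hσ ((⇑σ)^[k - 1] v)
    rw [← Function.iterate_succ_apply' (⇑σ) (k - 1) v] at h
    have : (k - 1).succ = k := by omega
    rw [this, hkv] at h
    exact h
  let p2 : G.Path v ((⇑σ)^[k - 1] v) := SimpleGraph.Path.singleton hadj
  have := hA.path_unique p1 p2
  have hlen : (p1 : G.Walk v ((⇑σ)^[k - 1] v)).length =
      (p2 : G.Walk v ((⇑σ)^[k - 1] v)).length := by rw [this]
  rw [orbitWalk_length] at hlen
  simp [p2, SimpleGraph.Path.singleton] at hlen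
  omega

lemma involution_sign (σ : Equiv.Perm V) (h2 : σ * σ = 1) (hfpf : ∀ v, σ v ≠ v) :
    Even (Fintype.card V) ∧
      Equiv.Perm.sign σ = (-1 : ℤˣ) ^ (Fintype.card V / 2) := by
  have hord : orderOf σ ∣ 2 := orderOf_dvd_of_pow_eq_one (by rw [pow_two]; exact h2)
  have hct : ∀ n ∈ σ.cycleType, n = 2 := by
    intro n hn
    refine le_antisymm ?_ (Equiv.Perm.two_le_of_mem_cycleType hn)
    exact Nat.le_of_dvd two_pos ((Multiset.dvd_lcm hn).trans
      (by rw [Equiv.Perm.lcm_cycleType]; exact hord))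
  have hrep : σ.cycleType = Multiset.replicate (Multiset.card σ.cycleType) 2 :=
    Multiset.eq_replicate.2 ⟨rfl, hct⟩
  have hsupp : σ.support = Finset.univ := by
    ext w; simp [Equiv.Perm.mem_support, hfpf w]
  have hsum : σ.cycleType.sum = Fintype.card V := by
    rw [Equiv.Perm.sum_cycleType, hsupp, Finset.card_univ]
  have hsum2 : σ.cycleType.sum = 2 * Multiset.card σ.cycleType := by
    rw [hrep]; simp [Multiset.sum_replicate, mul_comm]
  set c := Multiset.card σ.cycleType
  have hcard : Fintype.card V = 2 * c := by omega
  refine ⟨⟨c, by omega⟩, ?_⟩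
  rw [Equiv.Perm.sign_of_cycleType, hsum, hcard]
  have h1 : 2 * c + c = 2 * c + c := rfl
  have : (2 * c) / 2 = c := by omega
  rw [this, pow_add, pow_mul]
  norm_num
  rfl

lemma tree_det (hT : G.IsTree) :
    ∃ m : ℕ, (SimpleGraph.adjMatrix ℤ G).det =
        (m : ℤ) * (-1) ^ (Fintype.card V / 2) ∧
      (m ≠ 0 → Even (Fintype.card V)) := by
  classical
  set S : Finset (Equiv.Perm V) :=
    Finset.univ.filter (fun σ => ∀ i, G.Adj (σ i) i) with hS
  have hmem : ∀ σ : Equiv.Perm V, σ ∈ S ↔ ∀ i, G.Adj (σ i) i := by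
    intro σ; simp [hS]
  have hkey : ∀ σ ∈ S, Even (Fintype.card V) ∧
      Equiv.Perm.sign σ = (-1 : ℤˣ) ^ (Fintype.card V / 2) := by
    intro σ hσ
    have hadj := (hmem σ).1 hσ
    have hinv := perm_involution hT.IsAcyclic σ hadj
    have hfpf : ∀ v, σ v ≠ v := fun w h => G.irrefl (h ▸ hadj w)
    exact involution_sign σ (Equiv.ext fun w => hinv w) hfpf
  refine ⟨S.card, ?_, ?_⟩
  · rw [Matrix.det_apply]
    rw [← Finset.sum_subset (Finset.subset_univ S) ?zero]
    case zero =>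
      intro σ _ hσ
      rw [hmem] at hσ
      push_neg at hσ
      obtain ⟨i, hi⟩ := hσ
      have hz : (∏ j, SimpleGraph.adjMatrix ℤ G (σ j) j) = 0 :=
        Finset.prod_eq_zero (f := fun j => SimpleGraph.adjMatrix ℤ G (σ j) j)
          (Finset.mem_univ i) (by simp [hi])
      rw [hz, smul_zero]
    rw [Finset.sum_congr rfl (g := fun _ => ((-1 : ℤ)) ^ (Fintype.card V / 2)) ?_]
    · rw [Finset.sum_const, nsmul_eq_mul]
    · intro σ hσ
      have hadj := (hmem σ).1 hσ
      have hprod : (∏ i, SimpleGraph.adjMatrix ℤ G (σ i) i) = 1 := by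
        apply Finset.prod_eq_one
        intro i _
        simp [hadj i]
      rw [hprod, (hkey σ hσ).2]
      simp [Units.smul_def]
  · intro hm
    obtain ⟨σ, hσ⟩ := Finset.card_pos.1 (Nat.pos_of_ne_zero hm)
    exact (hkey σ hσ).1

end Aux

/-- Every palindromic finite tree has order divisible by 4, and every antipalindromic
tree has order congruent to 2 modulo 4. -/
theorem palindromic_tree_order_mod_four {V : Type*} [Finite V] (T : SimpleGraph V)
    (hT : T.IsTree) :
    (IsPalindromic T → 4 ∣ Nat.card V) ∧
      (IsAntipalindromic T → Nat.card V % 4 = 2) := by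
  letI := Fintype.ofFinite V
  letI := Classical.decEq V
  letI := Classical.decRel T.Adj
  have hcp : charPoly T = (SimpleGraph.adjMatrix ℤ T).charpoly := rfl
  have hn : Nat.card V = Fintype.card V := Nat.card_eq_fintype_card
  haveI : Nonempty V := hT.isConnected.nonempty
  set n := Fintype.card V with hndef
  have hdeg : (SimpleGraph.adjMatrix ℤ T).charpoly.natDegree = n :=
    Matrix.charpoly_natDegree_eq_dim _
  have hcoeffn : (charPoly T).coeff n = 1 := by
    rw [hcp, ← hdeg]
    exact (Matrix.charpoly_monic _).coeff_natDegree
  have hdet : (SimpleGraph.adjMatrix ℤ T).det =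
      (-1 : ℤ) ^ n * (charPoly T).coeff 0 := by
    rw [hcp]; exact Matrix.det_eq_sign_charpoly_coeff _
  obtain ⟨m, hm, hmev⟩ := tree_det hT
  constructor
  · intro hp
    have h0 := hp 0 (Nat.zero_le _)
    rw [hn, Nat.sub_zero, hcoeffn] at h0
    rw [hm, h0, mul_one] at hdet
    have hm1 : m = 1 := by
      have h1 := congrArg Int.natAbs hdet
      simpa [Int.natAbs_mul, Int.natAbs_pow] using h1
    have hev : Even n := hmev (by omega)
    rw [hm1, Nat.cast_one, one_mul, hev.neg_one_pow] at hdet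
    have hhalf : Even (n / 2) := by
      rcases Nat.even_or_odd (n / 2) with h' | h'
      · exact h'
      · rw [h'.neg_one_pow] at hdet; omega
    obtain ⟨a, ha⟩ := hev
    obtain ⟨b, hb⟩ := hhalf
    rw [hn]
    omega
  · intro hp
    have h0 := hp 0 (Nat.zero_le _)
    rw [hn, Nat.sub_zero, hcoeffn] at h0
    rw [hm, h0] at hdet
    have hm1 : m = 1 := by
      have h1 := congrArg Int.natAbs hdet
      simpa [Int.natAbs_mul, Int.natAbs_pow] using h1
    have hev : Even n := hmev (by omega)
    rw [hm1, Nat.cast_one, one_mul, hev.neg_one_pow, one_mul] at hdet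
    have hhalf : Odd (n / 2) := by
      rcases Nat.even_or_odd (n / 2) with h' | h'
      · rw [h'.neg_one_pow] at hdet; omega
      · exact h'
    obtain ⟨a, ha⟩ := hev
    obtain ⟨b, hb⟩ := hhalf
    rw [hn]
    omega
end

section
/- Let G₁ and G₂ be finite simple graphs, each of which is palindromic or antipalindromic. Then the tensor product G₁ ⊗ G₂ is palindromic. -/
open Polynomial

/-- The tensor (Kronecker/categorical) product of two simple graphs. -/
def tensorProd {V W : Type*} (G : SimpleGraph V) (G' : SimpleGraph W) :
    SimpleGraph (V × W) where
  Adj a b := G.Adj a.1 b.1 ∧ G'.Adj a.2 b.2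
  symm := ⟨fun _ _ h => ⟨h.1.symm, h.2.symm⟩⟩
  loopless := ⟨fun a h => G.loopless.irrefl a.1 h.1⟩

/-!
Over `ℝ` the adjacency matrices are symmetric, so their characteristic polynomials split as
`∏ (X - aᵢ)` and `∏ (X - bⱼ)`, and that of the Kronecker product as `∏ (X - aᵢ bⱼ)`.
(Anti)palindromicity says `∏ (1 - aᵢ x) = c ∏ (x - aᵢ)` with `c = ±1`; substituting `bⱼ x` and
`x / aᵢ` for `x` turns the two identities into the same identity for the products `aᵢ bⱼ`, up to
the sign `c ^ m ((-1) ^ m d) ^ n`, where `n` and `m` are the numbers of vertices. That sign is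
`1` because an (anti)palindromic graph has an even number of vertices: its determinant is `±1`,
whereas a symmetric integer matrix with zero diagonal and odd size has even determinant.
-/

open Matrix Finset Kronecker

namespace Polynomial

theorem reverse_eq_C_mul_iff {R : Type*} [Semiring R] {p : R[X]} {c : R} :
    p.reverse = C c * p ↔ ∀ i ≤ p.natDegree, p.coeff i = c * p.coeff (p.natDegree - i) := by
  constructor
  · intro h i hi
    have h' := congrArg (coeff · (p.natDegree - i)) h
    simp only [coeff_C_mul] at h'
    rwa [coeff_reverse, revAt_le (Nat.sub_le _ _), Nat.sub_sub_self hi] at h'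
  · intro h
    ext k
    rw [coeff_C_mul]
    by_cases hk : k ≤ p.natDegree
    · rw [coeff_reverse, revAt_le hk, h _ (Nat.sub_le _ _), Nat.sub_sub_self hk]
    · push Not at hk
      rw [coeff_eq_zero_of_natDegree_lt hk,
        coeff_eq_zero_of_natDegree_lt (p.reverse_natDegree_le.trans_lt hk), mul_zero]

theorem reverse_map_of_injective {R S : Type*} [Semiring R] [Semiring S] {f : R →+* S}
    (hf : Function.Injective f) (p : R[X]) : (p.map f).reverse = p.reverse.map f := by
  rw [reverse, reverse, natDegree_map_eq_of_injective hf, reflect_map]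

variable {R : Type*} [CommRing R] [IsDomain R]

theorem reverse_X_sub_C (a : R) : (X - C a).reverse = 1 - C a * X := by
  have hX : (X : R[X]).reverse = 1 := by
    have h := reverse_mul_X (C (1 : R))
    rwa [reverse_C, C_1, one_mul] at h
  rw [sub_eq_add_neg, ← map_neg, reverse_add_C, natDegree_X, hX, pow_one, map_neg, neg_mul,
    ← sub_eq_add_neg]

theorem reverse_prod_X_sub_C {ι : Type*} (s : Finset ι) (a : ι → R) :
    (∏ i ∈ s, (X - C (a i))).reverse = ∏ i ∈ s, (1 - C (a i) * X) := by
  induction s using Finset.cons_induction with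
  | empty => simpa using reverse_C (1 : R)
  | cons i s hi ih => rw [prod_cons, prod_cons, reverse_mul_of_domain, ih, reverse_X_sub_C]

theorem reverse_prod_X_sub_C_eq_C_mul_iff [Infinite R] {ι : Type*} [Fintype ι] (a : ι → R)
    (c : R) : (∏ i, (X - C (a i))).reverse = C c * ∏ i, (X - C (a i)) ↔
      ∀ x, ∏ i, (1 - a i * x) = c * ∏ i, (x - a i) := by
  rw [reverse_prod_X_sub_C]
  constructor
  · intro h x
    simpa [eval_prod] using congrArg (eval x) h
  · intro h
    exact Polynomial.funext fun x => by simpa [eval_prod] using h x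

end Polynomial

theorem prod_one_sub_mul_mul_eq {K : Type*} [Field K] {ι κ : Type*} [Fintype ι] [Fintype κ]
    {a : ι → K} {b : κ → K} {c d : K}
    (ha : ∀ x, ∏ i, (1 - a i * x) = c * ∏ i, (x - a i))
    (hb : ∀ x, ∏ j, (1 - b j * x) = d * ∏ j, (x - b j)) (x : K) :
    ∏ p : ι × κ, (1 - a p.1 * b p.2 * x) =
      c ^ Fintype.card κ * ((-1) ^ Fintype.card κ * d) ^ Fintype.card ι *
        ∏ p : ι × κ, (x - a p.1 * b p.2) := by
  have ha₀ : ∀ i, a i ≠ 0 := by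
    intro i hi
    have h := ha 0
    simp only [mul_zero, sub_zero, prod_const_one, zero_sub] at h
    rw [prod_eq_zero (mem_univ i) (by rw [hi, neg_zero]), mul_zero] at h
    exact one_ne_zero h
  have hrow : ∀ j, ∏ i, (1 - a i * b j * x) = c * ∏ i, (b j * x - a i) := fun j => by
    simpa only [mul_assoc] using ha (b j * x)
  have hcol : ∀ i, ∏ j, (b j * x - a i) = (-1) ^ Fintype.card κ * d * ∏ j, (x - a i * b j) := by
    intro i
    have hai := ha₀ i
    have hscale : ∀ f : κ → K, ∏ j, f j = a i ^ Fintype.card κ * ∏ j, (f j / a i) := fun f => by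
      rw [← card_univ, pow_card_mul_prod]
      exact prod_congr rfl fun j _ => (mul_div_cancel₀ _ hai).symm
    calc ∏ j, (b j * x - a i) = (-a i) ^ Fintype.card κ * ∏ j, (1 - b j * (x / a i)) := by
          rw [← card_univ, pow_card_mul_prod]
          refine prod_congr rfl fun j _ => ?_
          field_simp
          ring
      _ = (-a i) ^ Fintype.card κ * (d * ∏ j, (x / a i - b j)) := by rw [hb]
      _ = (-1) ^ Fintype.card κ * d * ∏ j, (x - a i * b j) := by
          rw [hscale fun j => x - a i * b j, neg_pow]
          simp only [sub_div, mul_div_cancel_left₀ _ hai]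
          ring
  calc ∏ p : ι × κ, (1 - a p.1 * b p.2 * x) = ∏ j, ∏ i, (1 - a i * b j * x) :=
        Fintype.prod_prod_type_right _
    _ = c ^ Fintype.card κ * ∏ i, ∏ j, (b j * x - a i) := by
        rw [prod_congr rfl fun j _ => hrow j, prod_mul_distrib, prod_const, card_univ, prod_comm]
    _ = _ := by
        rw [prod_congr rfl fun i _ => hcol i, prod_mul_distrib, prod_const, card_univ,
          Fintype.prod_prod_type, mul_assoc]

namespace Matrix

variable {m n : Type*} [Fintype m] [Fintype n] [DecidableEq m] [DecidableEq n]

theorem IsHermitian.charpoly_kronecker {𝕜 : Type*} [RCLike 𝕜] {A : Matrix m m 𝕜}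
    {B : Matrix n n 𝕜} (hA : A.IsHermitian) (hB : B.IsHermitian) :
    (A ⊗ₖ B).charpoly =
      ∏ p : m × n, (X - C ((hA.eigenvalues p.1 : 𝕜) * (hB.eigenvalues p.2 : 𝕜))) := by
  conv_lhs => rw [hA.spectral_theorem, hB.spectral_theorem]
  rw [Unitary.conjStarAlgAut_apply, Unitary.conjStarAlgAut_apply, mul_kronecker_mul,
    mul_kronecker_mul, charpoly_mul_comm, ← mul_assoc, ← mul_kronecker_mul,
    Unitary.coe_star_mul_self, Unitary.coe_star_mul_self, one_kronecker_one, one_mul,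
    diagonal_kronecker_diagonal, charpoly_diagonal]
  rfl

theorem IsHermitian.reverse_charpoly_kronecker {𝕜 : Type*} [RCLike 𝕜] {A : Matrix m m 𝕜}
    {B : Matrix n n 𝕜} (hA : A.IsHermitian) (hB : B.IsHermitian) {c d : 𝕜}
    (hAc : A.charpoly.reverse = C c * A.charpoly) (hBd : B.charpoly.reverse = C d * B.charpoly) :
    (A ⊗ₖ B).charpoly.reverse =
      C (c ^ Fintype.card n * ((-1) ^ Fintype.card n * d) ^ Fintype.card m) *
        (A ⊗ₖ B).charpoly := by
  rw [hA.charpoly_eq, reverse_prod_X_sub_C_eq_C_mul_iff] at hAc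
  rw [hB.charpoly_eq, reverse_prod_X_sub_C_eq_C_mul_iff] at hBd
  rw [hA.charpoly_kronecker hB, reverse_prod_X_sub_C_eq_C_mul_iff]
  exact prod_one_sub_mul_mul_eq hAc hBd

theorem reverse_charpoly_map_intCast_eq_iff {A : Matrix m m ℤ} {c : ℤ} :
    (A.map (Int.castRingHom ℝ)).charpoly.reverse =
        C (c : ℝ) * (A.map (Int.castRingHom ℝ)).charpoly ↔
      A.charpoly.reverse = C c * A.charpoly := by
  rw [charpoly_map, reverse_map_of_injective Int.cast_injective,
    ← eq_intCast (Int.castRingHom ℝ), ← Polynomial.map_C, ← Polynomial.map_mul,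
    (Polynomial.map_injective _ Int.cast_injective).eq_iff]

theorem IsSymm.reverse_charpoly_kronecker {A : Matrix m m ℤ} {B : Matrix n n ℤ}
    (hA : A.IsSymm) (hB : B.IsSymm) {c d : ℤ}
    (hAc : A.charpoly.reverse = C c * A.charpoly) (hBd : B.charpoly.reverse = C d * B.charpoly) :
    (A ⊗ₖ B).charpoly.reverse =
      C (c ^ Fintype.card n * ((-1) ^ Fintype.card n * d) ^ Fintype.card m) *
        (A ⊗ₖ B).charpoly := by
  have hA' : (A.map (Int.castRingHom ℝ)).IsHermitian := isHermitian_iff_isSymm.mpr (hA.map _)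
  have hB' : (B.map (Int.castRingHom ℝ)).IsHermitian := isHermitian_iff_isSymm.mpr (hB.map _)
  have hmap : (A ⊗ₖ B).map (Int.castRingHom ℝ) =
      A.map (Int.castRingHom ℝ) ⊗ₖ B.map (Int.castRingHom ℝ) := by
    ext; simp
  rw [← reverse_charpoly_map_intCast_eq_iff, hmap]
  push_cast
  exact hA'.reverse_charpoly_kronecker hB' (reverse_charpoly_map_intCast_eq_iff.mpr hAc)
    (reverse_charpoly_map_intCast_eq_iff.mpr hBd)

theorem isUnit_det_of_reverse_charpoly_eq_C_mul {R : Type*} [CommRing R] {M : Matrix n n R}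
    {c : R} (h : M.charpoly.reverse = C c * M.charpoly) : IsUnit M.det := by
  have h0 := congrArg (coeff · 0) h
  simp only [coeff_zero_reverse, M.charpoly_monic.leadingCoeff, coeff_C_mul] at h0
  rw [det_eq_sign_charpoly_coeff]
  exact (isUnit_neg_one.pow _).mul (.of_mul_eq_one_right c h0.symm)

/-- `σ ↦ σ⁻¹` pairs off equal terms of the Leibniz expansion, which cancel in characteristic two;
a self-paired `σ` is an involution of a set of odd size, so it fixes a point and its term
contains a diagonal entry. -/
theorem det_eq_zero_of_odd_card {R : Type*} [CommRing R] [CharP R 2] {A : Matrix n n R}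
    (hA : A.IsSymm) (hdiag : ∀ i, A i i = 0) (hodd : Odd (Fintype.card n)) : A.det = 0 := by
  rw [det_apply']
  refine sum_ninvolution (fun σ => σ⁻¹) (fun σ => ?_) (fun σ hσ hinv => ?_) (fun _ => mem_univ _)
    inv_inv
  · have hprod : ∏ i, A (σ⁻¹ i) i = ∏ i, A (σ i) i := by
      rw [← Equiv.prod_comp σ]
      exact prod_congr rfl fun i _ => by simpa using (hA.apply i (σ i)).symm
    rw [Equiv.Perm.sign_inv, hprod]
    exact CharTwo.add_self_eq_zero _
  · have hsq : σ ^ 2 ^ 1 = 1 := by rw [pow_one, sq, ← inv_mul_cancel σ, hinv]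
    obtain ⟨i, hi⟩ := Equiv.Perm.exists_fixed_point_of_prime
      (by simpa [← even_iff_two_dvd] using hodd) hsq
    exact hσ (by rw [prod_eq_zero (mem_univ i) (by rw [hi, hdiag]), mul_zero])

end Matrix

namespace SimpleGraph

theorem adjMatrix_tensorProd {V W : Type*} (G : SimpleGraph V) (G' : SimpleGraph W)
    [DecidableRel G.Adj] [DecidableRel G'.Adj] [DecidableRel (tensorProd G G').Adj] {R : Type*}
    [MulZeroOneClass R] :
    (tensorProd G G').adjMatrix R = G.adjMatrix R ⊗ₖ G'.adjMatrix R := by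
  ext ⟨v, w⟩ ⟨v', w'⟩
  simp only [adjMatrix_apply, kroneckerMap_apply, ite_zero_mul_ite_zero, one_mul]
  exact if_congr Iff.rfl rfl rfl

variable {V : Type*} [Fintype V] [DecidableEq V] (G : SimpleGraph V) [DecidableRel G.Adj]

theorem charPoly_eq_charpoly_adjMatrix : charPoly G = (G.adjMatrix ℤ).charpoly := by
  unfold charPoly
  congr!

theorem isPalindromic_iff :
    IsPalindromic G ↔ (G.adjMatrix ℤ).charpoly.reverse = (G.adjMatrix ℤ).charpoly := by
  have h := reverse_eq_C_mul_iff (p := (G.adjMatrix ℤ).charpoly) (c := 1)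
  simp only [C_1, one_mul] at h
  rw [h, IsPalindromic, charPoly_eq_charpoly_adjMatrix, Nat.card_eq_fintype_card,
    charpoly_natDegree_eq_dim]

theorem isAntipalindromic_iff :
    IsAntipalindromic G ↔ (G.adjMatrix ℤ).charpoly.reverse = -(G.adjMatrix ℤ).charpoly := by
  have h := reverse_eq_C_mul_iff (p := (G.adjMatrix ℤ).charpoly) (c := -1)
  simp only [map_neg, C_1, neg_one_mul] at h
  rw [h, IsAntipalindromic, charPoly_eq_charpoly_adjMatrix, Nat.card_eq_fintype_card,
    charpoly_natDegree_eq_dim]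

theorem exists_reverse_charpoly_eq_C_mul (h : IsPalindromic G ∨ IsAntipalindromic G) :
    ∃ c : ℤ, (c = 1 ∨ c = -1) ∧
      (G.adjMatrix ℤ).charpoly.reverse = C c * (G.adjMatrix ℤ).charpoly := by
  rcases h with h | h
  · exact ⟨1, .inl rfl, by rw [C_1, one_mul, ← isPalindromic_iff]; exact h⟩
  · exact ⟨-1, .inr rfl, by rw [map_neg, C_1, neg_one_mul, ← isAntipalindromic_iff]; exact h⟩

theorem even_card_of_isUnit_det (h : IsUnit (G.adjMatrix ℤ).det) : Even (Fintype.card V) := by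
  by_contra hodd
  have hmap : (G.adjMatrix ℤ).map (Int.castRingHom (ZMod 2)) = G.adjMatrix (ZMod 2) := by
    ext i j
    simp [adjMatrix_apply, apply_ite]
  have h2 := h.map (Int.castRingHom (ZMod 2))
  rw [RingHom.map_det, RingHom.mapMatrix_apply, hmap,
    det_eq_zero_of_odd_card G.isSymm_adjMatrix (by simp) (Nat.not_even_iff_odd.mp hodd)] at h2
  exact not_isUnit_zero h2

end SimpleGraph

/-- The tensor product of two finite simple graphs, each palindromic or antipalindromic,
is palindromic. -/
theorem tensorProd_palindromic {V W : Type*} [Finite V] [Finite W]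
    (G₁ : SimpleGraph V) (G₂ : SimpleGraph W)
    (h₁ : IsPalindromic G₁ ∨ IsAntipalindromic G₁)
    (h₂ : IsPalindromic G₂ ∨ IsAntipalindromic G₂) :
    IsPalindromic (tensorProd G₁ G₂) := by
  classical
  have := Fintype.ofFinite V
  have := Fintype.ofFinite W
  obtain ⟨c, hc, H₁⟩ := G₁.exists_reverse_charpoly_eq_C_mul h₁
  obtain ⟨d, hd, H₂⟩ := G₂.exists_reverse_charpoly_eq_C_mul h₂
  have hV := G₁.even_card_of_isUnit_det (isUnit_det_of_reverse_charpoly_eq_C_mul H₁)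
  have hW := G₂.even_card_of_isUnit_det (isUnit_det_of_reverse_charpoly_eq_C_mul H₂)
  have hsign : c ^ Fintype.card W * ((-1) ^ Fintype.card W * d) ^ Fintype.card V = 1 := by
    rcases hc with rfl | rfl <;> rcases hd with rfl | rfl <;>
      simp [hV.neg_one_pow, hW.neg_one_pow]
  rw [SimpleGraph.isPalindromic_iff, SimpleGraph.adjMatrix_tensorProd G₁ G₂]
  simpa [hsign] using G₁.isSymm_adjMatrix.reverse_charpoly_kronecker G₂.isSymm_adjMatrix H₁ H₂
end
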